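/- arXiv:1312.5168 — 2 statements merged into one kernel-verified Lean document; each statement's English description precedes it below -/
import Mathlib

section
/- Let (X, 𝒜, μ) be a finite measure space with 0 < μ(X) < ∞ and let S : X → X be measure preserving and ergodic. Then for every A ∈ 𝒜 and μ-almost every x ∈ X, the fraction of time the orbit spends in A converges to the normalized measure of A: (1/n) · #{k : 0 ≤ k < n, Sᵏ(x) ∈ A} → μ(A)/μ(X) as n → ∞. -/
/-!
The limsup of the Birkhoff averages of a bounded function `f` is `S`-invariant, so by ergodicity
it is almost everywhere equal to a constant `c`. If `a < c`, almost every orbit reaches an average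
`≥ a` after finitely many steps; outside a set of small measure this happens within `N` steps.
Cutting an orbit segment of length `L` greedily into such stretches and integrating, measure
preservation gives `a * μ X ≤ ∫ f` up to errors that vanish as `L → ∞` and `N → ∞`. Hence the
limsup is at most `∫ f / μ X`, and applying this to `-f` bounds the liminf from below.
-/

open MeasureTheory Filter Topology Finset Set

theorem limsup_eq_limsup_of_tendsto_sub_nhds_zero {ι : Type*} {l : Filter ι} [l.NeBot]
    {u v : ι → ℝ} (hv : IsBoundedUnder (· ≤ ·) l v) (hv' : IsBoundedUnder (· ≥ ·) l v)
    (h : Tendsto (u - v) l (𝓝 0)) : limsup u l = limsup v l := by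
  rw [show u = v + (u - v) from (add_sub_cancel v u).symm]
  refine le_antisymm ?_ ?_
  · calc limsup (v + (u - v)) l ≤ limsup v l + limsup (u - v) l :=
          limsup_add_le hv' hv h.isBoundedUnder_ge.isCoboundedUnder_le h.isBoundedUnder_le
      _ = limsup v l := by rw [h.limsup_eq, add_zero]
  · calc limsup v l = limsup v l + liminf (u - v) l := by rw [h.liminf_eq, add_zero]
      _ ≤ limsup (v + (u - v)) l :=
          le_limsup_add hv hv'.isCoboundedUnder_le h.isBoundedUnder_le h.isBoundedUnder_ge

section Birkhoff

variable {X : Type*} {S : X → X} {f : X → ℝ} {a b C : ℝ}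

theorem natCast_mul_le_birkhoffSum (hf : ∀ x, b ≤ f x) (n : ℕ) (x : X) :
    n * b ≤ birkhoffSum S f n x := by
  simpa [birkhoffSum] using card_nsmul_le_sum (range n) (fun k => f (S^[k] x)) b fun k _ => hf _

theorem mul_sub_le_birkhoffSum_of_forall_exists {N : ℕ} (hf : ∀ x, b ≤ f x) (hab : b ≤ a)
    (h : ∀ x, ∃ n, 0 < n ∧ n ≤ N ∧ n * a ≤ birkhoffSum S f n x) (L : ℕ) (x : X) :
    a * L - (a - b) * N ≤ birkhoffSum S f L x := by
  induction L using Nat.strong_induction_on generalizing x with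
  | _ L ih =>
  obtain ⟨n, hn, hnN, hna⟩ := h x
  rcases lt_or_ge L n with hLn | hnL
  · have hLN : (L : ℝ) ≤ N := by exact_mod_cast (hLn.trans_le hnN).le
    calc a * L - (a - b) * N ≤ L * b := by nlinarith
      _ ≤ birkhoffSum S f L x := natCast_mul_le_birkhoffSum hf L x
  · obtain ⟨m, rfl⟩ := Nat.exists_eq_add_of_le hnL
    have := ih m (by omega) (S^[n] x)
    rw [birkhoffSum_add]
    push_cast
    linarith

theorem abs_birkhoffAverage_le (hf : ∀ x, |f x| ≤ C) (n : ℕ) (x : X) :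
    |birkhoffAverage ℝ S f n x| ≤ C := by
  rcases n.eq_zero_or_pos with rfl | hn
  · simpa using (abs_nonneg _).trans (hf x)
  rw [birkhoffAverage, smul_eq_mul, abs_mul, abs_inv, Nat.abs_cast,
    inv_mul_le_iff₀ (by positivity)]
  calc |birkhoffSum S f n x| ≤ ∑ k ∈ range n, |f (S^[k] x)| := abs_sum_le_sum_abs _ _
    _ ≤ n * C := by simpa using sum_le_card_nsmul (range n) _ C fun k _ => hf _

theorem limsup_birkhoffAverage_apply_eq (hf : ∀ x, |f x| ≤ C) (x : X) :
    limsup (birkhoffAverage ℝ S f · (S x)) atTop = limsup (birkhoffAverage ℝ S f · x) atTop := by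
  have hbdd : Bornology.IsBounded (range f) :=
    isBounded_iff_forall_norm_le.2 ⟨C, forall_mem_range.2 hf⟩
  exact limsup_eq_limsup_of_tendsto_sub_nhds_zero
    (isBoundedUnder_of ⟨C, fun n => (abs_le.1 (abs_birkhoffAverage_le hf n x)).2⟩)
    (isBoundedUnder_of ⟨-C, fun n => (abs_le.1 (abs_birkhoffAverage_le hf n x)).1⟩)
    (tendsto_birkhoffAverage_apply_sub_birkhoffAverage' ℝ hbdd S x)

theorem birkhoffAverage_indicator_one (S : X → X) (A : Set X) [DecidablePred (· ∈ A)] (n : ℕ)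
    (x : X) :
    birkhoffAverage ℝ S (A.indicator 1) n x = (#{k ∈ range n | S^[k] x ∈ A} : ℝ) / n := by
  simp only [birkhoffAverage, birkhoffSum, indicator_apply, Pi.one_apply, sum_boole, smul_eq_mul,
    inv_mul_eq_div]

variable [MeasurableSpace X] {μ : Measure X}

theorem Measurable.birkhoffSum (hf : Measurable f) (hS : Measurable S) (n : ℕ) :
    Measurable (birkhoffSum S f n) :=
  Finset.measurable_sum _ fun k _ => hf.comp (hS.iterate k)

theorem MeasureTheory.MeasurePreserving.integrable_birkhoffSum (hS : MeasurePreserving S μ μ)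
    (hf : Integrable f μ) (n : ℕ) : Integrable (birkhoffSum S f n) μ :=
  integrable_finsetSum _ fun k _ => (hS.iterate k).integrable_comp_of_integrable hf

theorem MeasureTheory.MeasurePreserving.integral_birkhoffSum (hS : MeasurePreserving S μ μ)
    (hf : Integrable f μ) (n : ℕ) : ∫ x, birkhoffSum S f n x ∂μ = n * ∫ x, f x ∂μ := by
  have hint (k : ℕ) : Integrable (fun x => f (S^[k] x)) μ :=
    (hS.iterate k).integrable_comp_of_integrable hf
  have hcomp (k : ℕ) : ∫ x, f (S^[k] x) ∂μ = ∫ x, f x ∂μ := by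
    rw [← integral_map (hS.iterate k).aemeasurable (by rw [(hS.iterate k).map_eq]; exact hf.1),
      (hS.iterate k).map_eq]
  simp only [birkhoffSum]
  rw [integral_finsetSum _ fun k _ => hint k]
  simp [hcomp]

variable [IsFiniteMeasure μ]

theorem mul_measureReal_univ_le_integral_of_forall_exists {N : ℕ}
    (hS : MeasurePreserving S μ μ) (hfi : Integrable f μ) (hf : ∀ x, b ≤ f x) (hab : b ≤ a)
    (h : ∀ x, ∃ n, 0 < n ∧ n ≤ N ∧ n * a ≤ birkhoffSum S f n x) :
    a * μ.real univ ≤ ∫ x, f x ∂μ := by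
  have hL (L : ℕ) (hL : 0 < L) :
      a * μ.real univ - (a - b) * N * μ.real univ / L ≤ ∫ x, f x ∂μ := by
    have hint := integral_mono (integrable_const _) (hS.integrable_birkhoffSum hfi L)
      (mul_sub_le_birkhoffSum_of_forall_exists hf hab h L)
    rw [integral_const, hS.integral_birkhoffSum hfi, smul_eq_mul] at hint
    rw [sub_le_iff_le_add, ← sub_le_iff_le_add', le_div_iff₀ (by exact_mod_cast hL)]
    nlinarith
  have hlim : Tendsto (fun L : ℕ => a * μ.real univ - (a - b) * N * μ.real univ / L) atTop
      (𝓝 (a * μ.real univ)) := by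
    simpa using tendsto_const_nhds (x := a * μ.real univ) |>.sub
      (tendsto_const_div_atTop_nhds_zero_nat ((a - b) * N * μ.real univ))
  exact le_of_tendsto hlim ((eventually_gt_atTop 0).mono hL)

theorem mul_measureReal_univ_le_integral_add_of_forall_notMem_exists {N : ℕ} {E : Set X}
    (hS : MeasurePreserving S μ μ) (hfi : Integrable f μ) (hf : ∀ x, b ≤ f x) (hab : b ≤ a)
    (hE : MeasurableSet E) (hN : 0 < N)
    (h : ∀ x ∉ E, ∃ n, 0 < n ∧ n ≤ N ∧ n * a ≤ birkhoffSum S f n x) :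
    a * μ.real univ ≤ ∫ x, f x ∂μ + (a - b) * μ.real E := by
  -- Raising `f` by `a - b` on `E` makes every orbit reach average `a` within `N` steps.
  set g := f + E.indicator fun _ => a - b
  have hfg (x : X) : f x ≤ g x :=
    le_add_of_nonneg_right (indicator_nonneg (fun _ _ => sub_nonneg.2 hab) x)
  have hg (x : X) : ∃ n, 0 < n ∧ n ≤ N ∧ n * a ≤ birkhoffSum S g n x := by
    by_cases hx : x ∈ E
    · refine ⟨1, one_pos, hN, ?_⟩
      have : g x = f x + (a - b) := by simp [g, hx]
      rw [birkhoffSum_one, Nat.cast_one, one_mul, this]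
      linarith [hf x]
    · obtain ⟨n, hn, hnN, hna⟩ := h x hx
      exact ⟨n, hn, hnN, hna.trans (sum_le_sum fun k _ => hfg _)⟩
  have hEi : Integrable (E.indicator fun _ => a - b) μ := (integrable_const _).indicator hE
  have := mul_measureReal_univ_le_integral_of_forall_exists hS (hfi.add hEi)
    (fun x => (hf x).trans (hfg x)) hab hg
  simp only [Pi.add_apply] at this
  rwa [integral_add hfi hEi, integral_indicator_const _ hE, smul_eq_mul, mul_comm (μ.real _)]
    at this

theorem mul_measureReal_univ_le_integral_of_ae_exists (hS : MeasurePreserving S μ μ)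
    (hfm : Measurable f) (hfi : Integrable f μ) (hf : ∀ x, b ≤ f x)
    (h : ∀ᵐ x ∂μ, ∃ n, 0 < n ∧ n * a ≤ birkhoffSum S f n x) :
    a * μ.real univ ≤ ∫ x, f x ∂μ := by
  rcases le_or_gt a b with hab | hab
  · calc a * μ.real univ ≤ b * μ.real univ := by gcongr
      _ = ∫ _, b ∂μ := by rw [integral_const, smul_eq_mul, mul_comm]
      _ ≤ ∫ x, f x ∂μ := integral_mono (integrable_const b) hfi hf
  set E : ℕ → Set X := fun N => {x | ∀ n, 0 < n → n ≤ N → birkhoffSum S f n x < n * a}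
  have hEm (N : ℕ) : MeasurableSet (E N) := by
    simp only [E, ofPred_forall]
    exact .iInter fun n => .iInter fun _ => .iInter fun _ =>
      measurableSet_lt (hfm.birkhoffSum hS.measurable n) measurable_const
  have hE0 : Tendsto (fun N => μ.real (E N)) atTop (𝓝 0) := by
    have hnull : μ (⋂ N, E N) = 0 := by
      refine measure_mono_null (fun x hx => ?_) (ae_iff.1 h)
      rintro ⟨n, hn, hna⟩
      exact hna.not_gt (mem_iInter.1 hx n n hn le_rfl)
    have hanti : Antitone E := fun M N hMN x hx n hn hnN => hx n hn (hnN.trans hMN)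
    have := tendsto_measure_iInter_atTop (fun N => (hEm N).nullMeasurableSet) hanti
      ⟨0, measure_ne_top μ _⟩
    rw [hnull] at this
    exact (ENNReal.tendsto_toReal ENNReal.zero_ne_top).comp this
  refine ge_of_tendsto ?_ ((eventually_gt_atTop 0).mono fun N hN =>
    mul_measureReal_univ_le_integral_add_of_forall_notMem_exists hS hfi hf hab.le (hEm N) hN
      fun x hx => by simpa [E] using hx)
  simpa using tendsto_const_nhds (x := ∫ x, f x ∂μ) |>.add (hE0.const_mul (a - b))

theorem MeasureTheory.Ergodic.ae_eventually_birkhoffAverage_lt (hS : Ergodic S μ)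
    (hfm : Measurable f) (hf : ∀ x, |f x| ≤ C) :
    ∀ᵐ x ∂μ, ∀ a, (∫ y, f y ∂μ) / μ.real univ < a →
      ∀ᶠ n in atTop, birkhoffAverage ℝ S f n x < a := by
  rcases eq_zero_or_neZero μ with rfl | hμ
  · simp
  have hbdd (x : X) : IsBoundedUnder (· ≤ ·) atTop (birkhoffAverage ℝ S f · x) ∧
      IsBoundedUnder (· ≥ ·) atTop (birkhoffAverage ℝ S f · x) :=
    ⟨isBoundedUnder_of ⟨C, fun n => (abs_le.1 (abs_birkhoffAverage_le hf n x)).2⟩,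
      isBoundedUnder_of ⟨-C, fun n => (abs_le.1 (abs_birkhoffAverage_le hf n x)).1⟩⟩
  have hFm : Measurable fun x => limsup (birkhoffAverage ℝ S f · x) atTop :=
    Measurable.limsup fun n => (hfm.birkhoffSum hS.measurable n).const_smul (n : ℝ)⁻¹
  obtain ⟨c, hc⟩ := hS.toPreErgodic.ae_eq_const_of_ae_eq_comp hFm
    (funext fun x => limsup_birkhoffAverage_apply_eq hf x)
  have hfi : Integrable f μ := .of_bound hfm.aestronglyMeasurable C (ae_of_all _ hf)
  have hcle : c ≤ (∫ y, f y ∂μ) / μ.real univ := by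
    refine le_of_forall_lt_imp_le_of_dense fun a ha => ?_
    rw [le_div_iff₀ measureReal_univ_pos]
    refine mul_measureReal_univ_le_integral_of_ae_exists hS.toMeasurePreserving hfm hfi
      (fun x => (abs_le.1 (hf x)).1) ?_
    filter_upwards [hc] with x (hx : limsup _ atTop = c)
    have hfreq : ∃ᶠ n in atTop, a < birkhoffAverage ℝ S f n x :=
      frequently_lt_of_lt_limsup (hbdd x).2.isCoboundedUnder_le (hx ▸ ha)
    obtain ⟨n, hna, hn⟩ := (hfreq.and_eventually (eventually_gt_atTop 0)).exists
    rw [birkhoffAverage, smul_eq_mul, lt_inv_mul_iff₀ (by exact_mod_cast hn)] at hna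
    exact ⟨n, hn, hna.le⟩
  filter_upwards [hc] with x (hx : limsup _ atTop = c) a ha
  exact eventually_lt_of_limsup_lt (hx ▸ hcle.trans_lt ha) (hbdd x).1

theorem MeasureTheory.Ergodic.ae_tendsto_birkhoffAverage (hS : Ergodic S μ)
    (hfm : Measurable f) (hf : ∀ x, |f x| ≤ C) :
    ∀ᵐ x ∂μ, Tendsto (birkhoffAverage ℝ S f · x) atTop (𝓝 ((∫ y, f y ∂μ) / μ.real univ)) := by
  have hf' (x : X) : |(-f) x| ≤ C := by simpa using hf x
  filter_upwards [hS.ae_eventually_birkhoffAverage_lt hfm hf,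
    hS.ae_eventually_birkhoffAverage_lt hfm.neg hf'] with x hupper hlower
  refine tendsto_order.2 ⟨fun a ha => ?_, hupper⟩
  have := hlower (-a) (by simpa [integral_neg, neg_div] using ha)
  simpa [birkhoffAverage_neg] using this

end Birkhoff

open Classical in
theorem ergodic_visit_frequency_general
    {X : Type*} [MeasurableSpace X] (μ : Measure X) [IsFiniteMeasure μ]
    (S : X → X) (hS : Measurable S)
    (hpres : ∀ A : Set X, MeasurableSet A → μ (S ⁻¹' A) = μ A)
    (herg : ∀ A : Set X, MeasurableSet A → S ⁻¹' A = A → μ A = 0 ∨ μ Aᶜ = 0)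
    (A : Set X) (hA : MeasurableSet A) :
    ∀ᵐ x ∂μ, Tendsto
      (fun n : ℕ =>
        ((Finset.range n).filter (fun k => S^[k] x ∈ A)).card / (n : ℝ))
      atTop (𝓝 ((μ A).toReal / (μ Set.univ).toReal)) := by
  have hS_erg : Ergodic S μ :=
    ⟨⟨hS, Measure.ext fun s hs => by rw [Measure.map_apply hS hs, hpres s hs]⟩,
      ⟨fun s hs hinv => eventuallyConst_set'.2 ((herg s hs hinv).imp ae_eq_empty.2 ae_eq_univ.2)⟩⟩
  have hbound (x : X) : |A.indicator (1 : X → ℝ) x| ≤ 1 := by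
    by_cases hx : x ∈ A <;> simp [hx]
  filter_upwards [hS_erg.ae_tendsto_birkhoffAverage (measurable_one.indicator hA) hbound] with x hx
  simpa [birkhoffAverage_indicator_one, integral_indicator_one hA, measureReal_def] using hx

open Classical in
/-- Let `(X, 𝒜, μ)` be a finite measure space with `0 < μ(X) < ∞` and let
`S : X → X` be measure preserving and ergodic.  Then for every `A ∈ 𝒜` and μ-a.e. `x`, the
fraction of time the orbit of `x` spends in `A` among the first `n` iterates converges to
`μ(A)/μ(X)`. -/
theorem ergodic_visit_frequency
    {X : Type*} [MeasurableSpace X] (μ : Measure X) [IsFiniteMeasure μ]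
    (hμpos : 0 < μ Set.univ)
    (S : X → X) (hS : Measurable S)
    (hpres : ∀ A : Set X, MeasurableSet A → μ (S ⁻¹' A) = μ A)
    (herg : ∀ A : Set X, MeasurableSet A → S ⁻¹' A = A → μ A = 0 ∨ μ Aᶜ = 0)
    (A : Set X) (hA : MeasurableSet A) :
    ∀ᵐ x ∂μ, Tendsto
      (fun n : ℕ =>
        ((Finset.range n).filter (fun k => S^[k] x ∈ A)).card / (n : ℝ))
      atTop (𝓝 ((μ A).toReal / (μ Set.univ).toReal)) :=
  ergodic_visit_frequency_general μ S hS hpres herg A hA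
end

section
/- Let (X, 𝒜, μ) be a σ-finite measure space, S : X → X a measurable nonsingular map, and P the Frobenius–Perron operator associated with S. Suppose there exist a density ϑ and a density ℓ such that the iterates satisfy Pⁿϑ ≤ ℓ μ-a.e. for every n ≥ 0. Then P has a stationary density, i.e. there exists a density ϑ⋆ with Pϑ⋆ = ϑ⋆ μ-a.e. -/
/-!
Average the measures `μ_n` with densities `Pⁿϑ` in Cesàro fashion and take setwise limits along a
free ultrafilter on `ℕ`; they exist because `ℝ≥0∞` is compact. Every `μ_n` lies below the finite
measure with density `ℓ`, so tails of disjoint unions are uniformly small and the limit `m` is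
countably additive: a probability measure with `m ≪ μ`. Since `P` acts on densities as the
pushforward by `S`, the Cesàro averages along the orbit telescope and `m` is `S`-invariant
(Krylov–Bogolyubov); its Radon–Nikodym derivative is the stationary density.
-/

open MeasureTheory Filter Topology
open scoped ENNReal Function

section SetwiseLimit

variable {X ι : Type*} [MeasurableSpace X]

theorem measure_iUnion_eq_sum_range_add_biUnion_Ici (μ : Measure X) {A : ℕ → Set X}
    (hA : ∀ i, MeasurableSet (A i)) (hdisj : Pairwise (Disjoint on A)) (N : ℕ) :
    μ (⋃ i, A i) = ∑ i ∈ Finset.range N, μ (A i) + μ (⋃ i ≥ N, A i) := by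
  have hsplit : ⋃ i, A i = (⋃ i ∈ Finset.range N, A i) ∪ ⋃ i ≥ N, A i := by
    ext; simp only [Set.mem_iUnion, Set.mem_union, Finset.mem_range]; grind
  have hdisj' : Disjoint (⋃ i ∈ Finset.range N, A i) (⋃ i ≥ N, A i) := by
    simp only [Finset.mem_range, Set.disjoint_iUnion_left, Set.disjoint_iUnion_right]
    exact fun i hi j hj => hdisj (by omega)
  rw [hsplit, measure_union hdisj' (.biUnion (Set.to_countable _) fun i _ => hA i),
    measure_biUnion_finset (fun i _ j _ hij => hdisj hij) fun i _ => hA i]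

theorem exists_measure_tendsto_apply_of_le {F : Filter ι} [F.NeBot] {c : ι → Measure X}
    {ρ : Measure X} [IsFiniteMeasure ρ] (hc : ∀ i, c i ≤ ρ)
    (hconv : ∀ A, MeasurableSet A → ∃ a, Tendsto (fun i => c i A) F (𝓝 a)) :
    ∃ m ≤ ρ, ∀ A, MeasurableSet A → Tendsto (fun i => c i A) F (𝓝 (m A)) := by
  choose Λ hΛ using hconv
  have hΛρ : ∀ A (hA : MeasurableSet A), Λ A hA ≤ ρ A := fun A hA =>
    le_of_tendsto' (hΛ A hA) fun i => Measure.le_iff.1 (hc i) A hA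
  have hΛ_empty : Λ ∅ .empty = 0 := tendsto_nhds_unique (hΛ _ _) (by simp)
  have hΛ_iUnion : ∀ ⦃A : ℕ → Set X⦄ (hA : ∀ i, MeasurableSet (A i)),
      Pairwise (Disjoint on A) → Λ (⋃ i, A i) (.iUnion hA) = ∑' i, Λ (A i) (hA i) := by
    intro A hA hdisj
    have htail : ∀ N, MeasurableSet (⋃ i ≥ N, A i) := fun N =>
      .biUnion (Set.to_countable _) fun i _ => hA i
    have hsplit : ∀ N, Λ (⋃ i, A i) (.iUnion hA) =
        ∑ i ∈ Finset.range N, Λ (A i) (hA i) + Λ (⋃ i ≥ N, A i) (htail N) := fun N => by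
      refine tendsto_nhds_unique (hΛ _ _) ?_
      simp only [measure_iUnion_eq_sum_range_add_biUnion_Ici _ hA hdisj N]
      exact (tendsto_finsetSum _ fun i _ => hΛ _ _).add (hΛ _ _)
    have htail_zero : Tendsto (fun N => Λ (⋃ i ≥ N, A i) (htail N)) atTop (𝓝 0) :=
      tendsto_of_tendsto_of_tendsto_of_le_of_le tendsto_const_nhds
        (tendsto_measure_biUnion_Ici_zero_of_pairwise_disjoint
          (fun i => (hA i).nullMeasurableSet) hdisj)
        (fun _ => zero_le) fun N => hΛρ _ _
    have h := (ENNReal.tendsto_nat_tsum fun i => Λ (A i) (hA i)).add htail_zero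
    simp only [← hsplit, add_zero] at h
    exact tendsto_const_nhds_iff.1 h
  refine ⟨Measure.ofMeasurable Λ hΛ_empty hΛ_iUnion, Measure.le_iff.2 fun A hA => ?_,
    fun A hA => ?_⟩ <;> rw [Measure.ofMeasurable_apply A hA]
  exacts [hΛρ A hA, hΛ A hA]

end SetwiseLimit

section Cesaro

variable {X : Type*} [MeasurableSpace X]

noncomputable def cesaroMeasure (ν : ℕ → Measure X) (n : ℕ) : Measure X :=
  ((n : ℝ≥0∞) + 1)⁻¹ • ∑ k ∈ Finset.range (n + 1), ν k

theorem cesaroMeasure_apply (ν : ℕ → Measure X) (n : ℕ) (A : Set X) :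
    cesaroMeasure ν n A = ((n : ℝ≥0∞) + 1)⁻¹ * ∑ k ∈ Finset.range (n + 1), ν k A := by
  simp [cesaroMeasure, Measure.finsetSum_apply]

theorem cesaroMeasure_le {ν : ℕ → Measure X} {ρ : Measure X} (h : ∀ k, ν k ≤ ρ) (n : ℕ) :
    cesaroMeasure ν n ≤ ρ := by
  refine Measure.le_iff'.2 fun A => ?_
  calc cesaroMeasure ν n A ≤ ((n : ℝ≥0∞) + 1)⁻¹ * ∑ k ∈ Finset.range (n + 1), ρ A := by
        rw [cesaroMeasure_apply]; gcongr with k; exact h k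
    _ = ρ A := by
        rw [Finset.sum_const, Finset.card_range, nsmul_eq_mul, ← mul_assoc, Nat.cast_succ,
          ENNReal.inv_mul_cancel (by simp) (by simp), one_mul]

instance isProbabilityMeasure_cesaroMeasure (ν : ℕ → Measure X)
    [∀ k, IsProbabilityMeasure (ν k)] (n : ℕ) : IsProbabilityMeasure (cesaroMeasure ν n) := by
  constructor
  simp only [cesaroMeasure_apply, measure_univ, Finset.sum_const, Finset.card_range, nsmul_one,
    Nat.cast_succ]
  exact ENNReal.inv_mul_cancel (by simp) (by simp)

variable {T : X → X} {ν : ℕ → Measure X}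

theorem cesaroMeasure_preimage_add (hT : Measurable T) (hν : ∀ k, ν (k + 1) = (ν k).map T)
    {A : Set X} (hA : MeasurableSet A) (n : ℕ) :
    cesaroMeasure ν n (T ⁻¹' A) + ((n : ℝ≥0∞) + 1)⁻¹ * ν 0 A =
      cesaroMeasure ν n A + ((n : ℝ≥0∞) + 1)⁻¹ * ν (n + 1) A := by
  have hpre : ∀ k, ν k (T ⁻¹' A) = ν (k + 1) A := fun k => by
    rw [hν, Measure.map_apply hT hA]
  simp only [cesaroMeasure_apply, hpre, ← mul_add]
  rw [← Finset.sum_range_succ' (fun k => ν k A), ← Finset.sum_range_succ]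

theorem map_eq_of_tendsto_cesaroMeasure [IsFiniteMeasure (ν 0)] (hT : Measurable T)
    (hν : ∀ k, ν (k + 1) = (ν k).map T) {F : Filter ℕ} [F.NeBot] (hF : F ≤ atTop)
    {m : Measure X}
    (hm : ∀ A, MeasurableSet A → Tendsto (fun n => cesaroMeasure ν n A) F (𝓝 (m A))) :
    m.map T = m := by
  ext A hA
  have hmass : ∀ k, ν k Set.univ = ν 0 Set.univ := fun k => by
    induction k with
    | zero => rfl
    | succ k ih => rw [hν, Measure.map_apply hT .univ, Set.preimage_univ, ih]
  have hinv : Tendsto (fun n : ℕ => ((n : ℝ≥0∞) + 1)⁻¹) atTop (𝓝 0) := by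
    simpa only [Function.comp_def, Nat.cast_succ] using
      ENNReal.tendsto_inv_nat_nhds_zero.comp (tendsto_add_atTop_nat 1)
  have hvanish : ∀ j : ℕ → ℕ,
      Tendsto (fun n : ℕ => ((n : ℝ≥0∞) + 1)⁻¹ * ν (j n) A) F (𝓝 0) := by
    intro j
    have hbound :=
      (ENNReal.Tendsto.mul_const hinv (.inr (measure_ne_top (ν 0) .univ))).mono_left hF
    rw [zero_mul] at hbound
    refine tendsto_of_tendsto_of_tendsto_of_le_of_le tendsto_const_nhds hbound (fun _ => zero_le)
      fun n => ?_
    gcongr _ * ?_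
    exact (measure_mono (Set.subset_univ A)).trans (hmass (j n)).le
  have h := tendsto_nhds_unique ((hm _ (hT hA)).add (hvanish fun _ => 0))
    (by simpa only [cesaroMeasure_preimage_add hT hν hA] using (hm A hA).add (hvanish (· + 1)))
  rwa [add_zero, add_zero, ← Measure.map_apply hT hA] at h

end Cesaro

section FrobeniusPerron

variable {X : Type*} [MeasurableSpace X]

def IsFrobeniusPerron (μ : Measure X) (S : X → X) (P : (X → ℝ) → (X → ℝ)) : Prop :=
  ∀ f : X → ℝ, Integrable f μ → 0 ≤ᵐ[μ] f →
    Integrable (P f) μ ∧ 0 ≤ᵐ[μ] P f ∧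
      ∀ A : Set X, MeasurableSet A → ∫ x in A, P f x ∂μ = ∫ x in S ⁻¹' A, f x ∂μ

namespace IsFrobeniusPerron

variable {μ : Measure X} {S : X → X} {P : (X → ℝ) → (X → ℝ)} {f : X → ℝ}

theorem iterate (hP : IsFrobeniusPerron μ S P) (hf : Integrable f μ) (hf0 : 0 ≤ᵐ[μ] f)
    (n : ℕ) : Integrable (P^[n] f) μ ∧ 0 ≤ᵐ[μ] P^[n] f := by
  induction n with
  | zero => exact ⟨hf, hf0⟩
  | succ n ih =>
    obtain ⟨hPi, hP0, -⟩ := hP _ ih.1 ih.2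
    rw [Function.iterate_succ_apply']
    exact ⟨hPi, hP0⟩

theorem withDensity_eq_map (hP : IsFrobeniusPerron μ S P) (hS : Measurable S)
    (hf : Integrable f μ) (hf0 : 0 ≤ᵐ[μ] f) :
    μ.withDensity (fun x => ENNReal.ofReal (P f x)) =
      (μ.withDensity fun x => ENNReal.ofReal (f x)).map S := by
  obtain ⟨hPf, hPf0, hPf_set⟩ := hP f hf hf0
  ext A hA
  rw [Measure.map_apply hS hA, withDensity_apply _ hA, withDensity_apply _ (hS hA),
    ← ofReal_integral_eq_lintegral_ofReal hPf.integrableOn (ae_restrict_of_ae hPf0),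
    ← ofReal_integral_eq_lintegral_ofReal hf.integrableOn (ae_restrict_of_ae hf0),
    hPf_set A hA]

theorem ae_eq_self_of_map_withDensity_eq (hP : IsFrobeniusPerron μ S P) (hS : Measurable S)
    (hf : Integrable f μ) (hf0 : 0 ≤ᵐ[μ] f)
    (hinv : (μ.withDensity fun x => ENNReal.ofReal (f x)).map S =
      μ.withDensity fun x => ENNReal.ofReal (f x)) :
    P f =ᵐ[μ] f := by
  obtain ⟨hPf, hPf0, -⟩ := hP f hf hf0
  have h := (withDensity_eq_iff hPf.1.aemeasurable.ennreal_ofReal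
    hf.1.aemeasurable.ennreal_ofReal hPf.lintegral_lt_top.ne).1
    ((hP.withDensity_eq_map hS hf hf0).trans hinv)
  filter_upwards [h, hPf0, hf0] with x hx hPx hfx
  exact (ENNReal.ofReal_eq_ofReal_iff hPx hfx).1 hx

end IsFrobeniusPerron

end FrobeniusPerron

theorem withDensity_ofReal_toReal_rnDeriv {X : Type*} [MeasurableSpace X] {m μ : Measure X}
    [IsFiniteMeasure m] [SigmaFinite μ] (hmμ : m ≪ μ) :
    (μ.withDensity fun x => ENNReal.ofReal (m.rnDeriv μ x).toReal) = m := by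
  conv_rhs => rw [← Measure.withDensity_rnDeriv_eq m μ hmμ]
  refine withDensity_congr_ae ((Measure.rnDeriv_lt_top m μ).mono fun x hx => ?_)
  exact ENNReal.ofReal_toReal hx.ne

theorem dominated_iterates_implies_stationary_density_general
    {X : Type*} [MeasurableSpace X] (μ : Measure X) [SigmaFinite μ]
    (S : X → X) (hS : Measurable S)
    (P : (X → ℝ) → (X → ℝ))
    (hP : ∀ f : X → ℝ, Integrable f μ → 0 ≤ᵐ[μ] f →
      Integrable (P f) μ ∧ 0 ≤ᵐ[μ] P f ∧
      ∀ A : Set X, MeasurableSet A → ∫ x in A, P f x ∂μ = ∫ x in S ⁻¹' A, f x ∂μ)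
    (ϑ ℓ : X → ℝ)
    (hϑi : Integrable ϑ μ) (hϑ0 : 0 ≤ᵐ[μ] ϑ) (hϑ1 : ∫ x, ϑ x ∂μ = 1)
    (hℓi : Integrable ℓ μ)
    (hdom : ∀ n : ℕ, (P^[n] ϑ) ≤ᵐ[μ] ℓ) :
    ∃ ϑs : X → ℝ, Integrable ϑs μ ∧ 0 ≤ᵐ[μ] ϑs ∧ (∫ x, ϑs x ∂μ = 1) ∧
      P ϑs =ᵐ[μ] ϑs := by
  have hFP : IsFrobeniusPerron μ S P := hP
  set ν : ℕ → Measure X := fun k => μ.withDensity fun x => ENNReal.ofReal (P^[k] ϑ x)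
  have hν : ∀ k, ν (k + 1) = (ν k).map S := fun k => by
    obtain ⟨hi, h0⟩ := hFP.iterate hϑi hϑ0 k
    simpa only [ν, Function.iterate_succ_apply'] using hFP.withDensity_eq_map hS hi h0
  have hνℓ : ∀ k, ν k ≤ μ.withDensity fun x => ENNReal.ofReal (ℓ x) := fun k =>
    withDensity_mono ((hdom k).mono fun x hx => ENNReal.ofReal_le_ofReal hx)
  have : IsFiniteMeasure (μ.withDensity fun x => ENNReal.ofReal (ℓ x)) :=
    isFiniteMeasure_withDensity_ofReal hℓi.2
  have hν_prob : ∀ k, IsProbabilityMeasure (ν k) := fun k => by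
    induction k with
    | zero => exact ⟨by simp [ν, ← ofReal_integral_eq_lintegral_ofReal hϑi hϑ0, hϑ1]⟩
    | succ k ih => rw [hν]; exact Measure.isProbabilityMeasure_map hS.aemeasurable
  obtain ⟨m, hmℓ, hm⟩ := exists_measure_tendsto_apply_of_le (F := ↑(hyperfilter ℕ))
    (cesaroMeasure_le hνℓ) fun A _ =>
      ⟨_, ((hyperfilter ℕ).map fun n => cesaroMeasure ν n A).le_nhds_lim⟩
  have hm_inv : m.map S = m := map_eq_of_tendsto_cesaroMeasure hS hν Nat.hyperfilter_le_atTop hm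
  have hm_univ : m Set.univ = 1 :=
    tendsto_nhds_unique (hm _ .univ) (by simp only [measure_univ]; exact tendsto_const_nhds)
  have : IsFiniteMeasure m := ⟨by simp [hm_univ]⟩
  have hmμ : m ≪ μ :=
    (Measure.absolutelyContinuous_of_le hmℓ).trans (withDensity_absolutelyContinuous _ _)
  have hg := Measure.integrable_toReal_rnDeriv (μ := m) (ν := μ)
  have hg0 : 0 ≤ᵐ[μ] fun x => (m.rnDeriv μ x).toReal :=
    ae_of_all _ fun _ => ENNReal.toReal_nonneg
  refine ⟨_, hg, hg0, by simp [Measure.integral_toReal_rnDeriv hmμ, Measure.real, hm_univ], ?_⟩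
  exact hFP.ae_eq_self_of_map_withDensity_eq hS hg hg0
    (by rw [withDensity_ofReal_toReal_rnDeriv hmμ, hm_inv])

/-- Let `(X, 𝒜, μ)` be a σ-finite measure space, `S : X → X` a measurable
nonsingular map, and `P` the Frobenius–Perron operator associated with `S`.  If there exist
densities `ϑ` and `ℓ` such that `Pⁿϑ ≤ ℓ` μ-a.e. for every `n ≥ 0`, then `P` has a stationary
density. -/
theorem dominated_iterates_implies_stationary_density
    {X : Type*} [MeasurableSpace X] (μ : Measure X) [SigmaFinite μ]
    (S : X → X) (hS : Measurable S)
    (hns : ∀ A : Set X, MeasurableSet A → μ A = 0 → μ (S ⁻¹' A) = 0)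
    (P : (X → ℝ) → (X → ℝ))
    (hP : ∀ f : X → ℝ, Integrable f μ → 0 ≤ᵐ[μ] f →
      Integrable (P f) μ ∧ 0 ≤ᵐ[μ] P f ∧
      ∀ A : Set X, MeasurableSet A → ∫ x in A, P f x ∂μ = ∫ x in S ⁻¹' A, f x ∂μ)
    (ϑ ℓ : X → ℝ)
    (hϑi : Integrable ϑ μ) (hϑ0 : 0 ≤ᵐ[μ] ϑ) (hϑ1 : ∫ x, ϑ x ∂μ = 1)
    (hℓi : Integrable ℓ μ) (hℓ0 : 0 ≤ᵐ[μ] ℓ) (hℓ1 : ∫ x, ℓ x ∂μ = 1)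
    (hdom : ∀ n : ℕ, (P^[n] ϑ) ≤ᵐ[μ] ℓ) :
    ∃ ϑs : X → ℝ, Integrable ϑs μ ∧ 0 ≤ᵐ[μ] ϑs ∧ (∫ x, ϑs x ∂μ = 1) ∧
      P ϑs =ᵐ[μ] ϑs :=
  dominated_iterates_implies_stationary_density_general μ S hS P hP ϑ ℓ hϑi hϑ0 hϑ1 hℓi hdom
end
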